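/- There exists a universal constant C > 0 such that the following holds for all natural numbers m ≥ 1 and n, every matrix B ∈ (ZMod 2)^{m×n}, and every real t > 0. Define g*(v) := max over z ∈ (ZMod 2)^n of (m − wt(B·z + v)) for v ∈ (ZMod 2)^m, and let μ := 2^{−m} · ∑_{v ∈ (ZMod 2)^m} g*(v) be its average over the uniform distribution. Then the number of v ∈ (ZMod 2)^m with |g*(v) − μ| ≥ t·m is at most 2^{m+1} · exp(−C·m·t²). -/

import Mathlib

open scoped Classical

/-- The Hamming weight of a vector over `ZMod 2`: the number of coordinates equal to `1`. -/
def hwt {m : ℕ} (v : Fin m → ZMod 2) : ℕ :=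
  (Finset.univ.filter fun i => v i = 1).card

/-- The maximum number of satisfied clauses of the MAX-XOR-SAT instance `(B, v)`:
`g*(v) = max_z (m - wt(B·z + v))`. -/
noncomputable def gstar {m n : ℕ} (B : Matrix (Fin m) (Fin n) (ZMod 2))
    (v : Fin m → ZMod 2) : ℝ :=
  Finset.univ.sup' Finset.univ_nonempty
    (fun z : Fin n → ZMod 2 => (m : ℝ) - hwt (B.mulVec z + v))

/-- The average of `g*` over uniformly random `v`: `μ = 2^{-m} ∑_v g*(v)`. -/
noncomputable def gstarMean {m n : ℕ} (B : Matrix (Fin m) (Fin n) (ZMod 2)) : ℝ :=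
  (2 : ℝ) ^ (-(m : ℤ)) * ∑ v : Fin m → ZMod 2, gstar B v


/-!
Flipping one coordinate of `v` changes one coordinate of `B·z + v` for every `z`, so `g*` changes
by at most `1`. McDiarmid's bounded-differences inequality on the uniform cube `(ZMod 2)^m` then
gives the tail bound with `C = 2`. The exponential moment is controlled by averaging out one
coordinate at a time: for a pair of values differing by at most `c`, the two-point Hoeffding
inequality `(e^a + e^b) / 2 ≤ e^{(a+b)/2 + (a-b)²/8}` (which is `cosh x ≤ e^{x²/2}`) costs a
factor `e^{L²c²/8}` per coordinate.
-/

open Finset Function Real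
open scoped Matrix

def HasBoundedDifferences {m : ℕ} (c : ℝ) (f : (Fin m → ZMod 2) → ℝ) : Prop :=
  ∀ v i b, |f (update v i b) - f v| ≤ c

noncomputable def cubeMean {m : ℕ} (f : (Fin m → ZMod 2) → ℝ) : ℝ :=
  (∑ v, f v) / 2 ^ m

lemma sum_cube_succ {M : Type*} [AddCommMonoid M] {m : ℕ} (F : (Fin (m + 1) → ZMod 2) → M) :
    ∑ v, F v = ∑ v : Fin m → ZMod 2, (F (Fin.cons 0 v) + F (Fin.cons 1 v)) := by
  rw [← (Fin.consEquiv fun _ => ZMod 2).sum_comp F, Fintype.sum_prod_type, sum_comm]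
  exact sum_congr rfl fun v _ => Fin.sum_univ_two fun b => F (Fin.cons b v)

lemma exp_add_exp_le (a b : ℝ) : exp a + exp b ≤ 2 * exp ((a + b) / 2 + (a - b) ^ 2 / 8) := by
  have hcosh : exp a + exp b = 2 * exp ((a + b) / 2) * cosh ((a - b) / 2) := by
    have ha : exp a = exp ((a + b) / 2) * exp ((a - b) / 2) := by rw [← exp_add]; ring_nf
    have hb : exp b = exp ((a + b) / 2) * exp (-((a - b) / 2)) := by rw [← exp_add]; ring_nf
    rw [cosh_eq, ha, hb]
    ring
  calc exp a + exp b ≤ 2 * exp ((a + b) / 2) * exp (((a - b) / 2) ^ 2 / 2) := by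
        rw [hcosh]; gcongr; exact cosh_le_exp_half_sq _
    _ = 2 * exp ((a + b) / 2 + (a - b) ^ 2 / 8) := by rw [mul_assoc, ← exp_add]; ring_nf

lemma cubeMean_neg {m : ℕ} (f : (Fin m → ZMod 2) → ℝ) : cubeMean (-f) = -cubeMean f := by
  simp only [cubeMean, Pi.neg_apply, sum_neg_distrib, neg_div]

namespace HasBoundedDifferences

variable {m : ℕ} {c : ℝ}

lemma abs_sub_cons {f : (Fin (m + 1) → ZMod 2) → ℝ} (hf : HasBoundedDifferences c f)
    (v : Fin m → ZMod 2) : |f (Fin.cons 0 v) - f (Fin.cons 1 v)| ≤ c := by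
  simpa [Fin.update_cons_zero] using hf (Fin.cons 1 v) 0 0

lemma average_cons {f : (Fin (m + 1) → ZMod 2) → ℝ} (hf : HasBoundedDifferences c f) :
    HasBoundedDifferences c fun v => (f (Fin.cons 0 v) + f (Fin.cons 1 v)) / 2 := by
  intro v i b
  have h0 := hf (Fin.cons 0 v) i.succ b
  have h1 := hf (Fin.cons 1 v) i.succ b
  rw [← Fin.cons_update, abs_le] at h0 h1
  rw [abs_le]
  constructor <;> linarith

lemma neg {f : (Fin m → ZMod 2) → ℝ} (hf : HasBoundedDifferences c f) :
    HasBoundedDifferences c (-f) := fun v i b => by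
  simpa only [Pi.neg_apply, neg_sub_neg, abs_sub_comm] using hf v i b

theorem sum_exp_le {f : (Fin m → ZMod 2) → ℝ} (hf : HasBoundedDifferences c f) (L : ℝ) :
    ∑ v, exp (L * f v) ≤ 2 ^ m * exp (L * cubeMean f + L ^ 2 * c ^ 2 * m / 8) := by
  induction m with
  | zero => simp [cubeMean]
  | succ m ih =>
    set g : (Fin m → ZMod 2) → ℝ := fun v => (f (Fin.cons 0 v) + f (Fin.cons 1 v)) / 2
    have hg_mean : cubeMean g = cubeMean f := by
      rw [cubeMean, cubeMean, sum_cube_succ f, ← sum_div, pow_succ', div_div]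
    have hpair (v : Fin m → ZMod 2) :
        exp (L * f (Fin.cons 0 v)) + exp (L * f (Fin.cons 1 v))
          ≤ 2 * exp (L ^ 2 * c ^ 2 / 8) * exp (L * g v) := by
      have hsq : (f (Fin.cons 0 v) - f (Fin.cons 1 v)) ^ 2 ≤ c ^ 2 := by
        rw [← sq_abs]
        exact pow_le_pow_left₀ (abs_nonneg _) (hf.abs_sub_cons v) 2
      have hLsq : (L * f (Fin.cons 0 v) - L * f (Fin.cons 1 v)) ^ 2 ≤ L ^ 2 * c ^ 2 := by
        rw [← mul_sub, mul_pow]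
        exact mul_le_mul_of_nonneg_left hsq (sq_nonneg L)
      refine (exp_add_exp_le _ _).trans ?_
      rw [mul_assoc, ← exp_add]
      gcongr 2 * exp ?_
      simp only [g]
      linarith
    calc ∑ v, exp (L * f v)
        = ∑ v, (exp (L * f (Fin.cons 0 v)) + exp (L * f (Fin.cons 1 v))) := sum_cube_succ _
      _ ≤ ∑ v, 2 * exp (L ^ 2 * c ^ 2 / 8) * exp (L * g v) := sum_le_sum fun v _ => hpair v
      _ ≤ 2 * exp (L ^ 2 * c ^ 2 / 8) *
            (2 ^ m * exp (L * cubeMean g + L ^ 2 * c ^ 2 * m / 8)) := by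
        rw [← mul_sum]; gcongr; exact ih hf.average_cons
      _ = 2 ^ (m + 1) * exp (L * cubeMean f + L ^ 2 * c ^ 2 * ↑(m + 1) / 8) := by
        rw [hg_mean, pow_succ, mul_mul_mul_comm, mul_comm 2, ← exp_add]
        push_cast
        ring_nf

/-- If `m * c ^ 2 = 0` the exponent is the junk value `0` and the bound is the trivial `2 ^ m`. -/
theorem card_le_sub_cubeMean_le {f : (Fin m → ZMod 2) → ℝ} (hf : HasBoundedDifferences c f)
    {s : ℝ} (hs : 0 ≤ s) :
    (#{v | s ≤ f v - cubeMean f} : ℝ) ≤ 2 ^ m * exp (-2 * s ^ 2 / (m * c ^ 2)) := by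
  -- the Chernoff exponent `L` minimising `L ^ 2 * c ^ 2 * m / 8 - L * s`
  set L := 4 * s / (m * c ^ 2)
  have hL : 0 ≤ L := by positivity
  have hexponent : L * cubeMean f + L ^ 2 * c ^ 2 * m / 8
      = -2 * s ^ 2 / (m * c ^ 2) + L * (cubeMean f + s) := by
    rcases eq_or_ne ((m : ℝ) * c ^ 2) 0 with h0 | h0
    · simp [L, h0]
    · simp only [L]; field_simp; ring
  have hmarkov : (#{v | s ≤ f v - cubeMean f} : ℝ) * exp (L * (cubeMean f + s))
      ≤ ∑ v, exp (L * f v) := by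
    rw [← nsmul_eq_mul]
    refine (card_nsmul_le_sum _ _ _ fun v hv => ?_).trans
      (sum_le_sum_of_subset_of_nonneg (filter_subset _ _) fun v _ _ => (exp_pos _).le)
    rw [mem_filter] at hv
    exact exp_le_exp.2 (mul_le_mul_of_nonneg_left (by linarith [hv.2]) hL)
  have := hmarkov.trans (hf.sum_exp_le L)
  rw [hexponent, exp_add, ← mul_assoc] at this
  exact le_of_mul_le_mul_right this (exp_pos _)

theorem card_le_abs_sub_cubeMean_le {f : (Fin m → ZMod 2) → ℝ}
    (hf : HasBoundedDifferences c f) {s : ℝ} (hs : 0 ≤ s) :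
    (#{v | s ≤ |f v - cubeMean f|} : ℝ) ≤ 2 ^ (m + 1) * exp (-2 * s ^ 2 / (m * c ^ 2)) := by
  have hsplit : ({v | s ≤ |f v - cubeMean f|} : Finset _)
      ⊆ ({v | s ≤ f v - cubeMean f} : Finset _) ∪
        ({v | s ≤ (-f) v - cubeMean (-f)} : Finset _) := by
    intro v hv
    simp only [mem_filter, mem_univ, true_and, mem_union, Pi.neg_apply, cubeMean_neg] at hv ⊢
    rcases le_abs.1 hv with h | h
    · exact .inl h
    · exact .inr (by linarith)
  calc (#{v | s ≤ |f v - cubeMean f|} : ℝ)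
      ≤ #{v | s ≤ f v - cubeMean f} + #{v | s ≤ (-f) v - cubeMean (-f)} := by
        exact_mod_cast (card_le_card hsplit).trans (card_union_le _ _)
    _ ≤ 2 ^ m * exp (-2 * s ^ 2 / (m * c ^ 2)) + 2 ^ m * exp (-2 * s ^ 2 / (m * c ^ 2)) :=
        add_le_add (hf.card_le_sub_cubeMean_le hs) (hf.neg.card_le_sub_cubeMean_le hs)
    _ = 2 ^ (m + 1) * exp (-2 * s ^ 2 / (m * c ^ 2)) := by ring

end HasBoundedDifferences

lemma hwt_le_hwt_add_one {m : ℕ} {u w : Fin m → ZMod 2} (i : Fin m)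
    (h : ∀ j ≠ i, u j = w j) : hwt u ≤ hwt w + 1 := by
  unfold hwt
  calc #{j | u j = 1} ≤ #(insert i (univ.filter fun j => w j = 1)) := by
        refine card_le_card fun j hj => ?_
        by_cases hji : j = i
        · simp [hji]
        · simp_all
    _ ≤ #{j | w j = 1} + 1 := card_insert_le _ _

lemma gstar_le_gstar_add_one {m n : ℕ} (B : Matrix (Fin m) (Fin n) (ZMod 2))
    {u w : Fin m → ZMod 2} (i : Fin m) (h : ∀ j ≠ i, u j = w j) :
    gstar B u ≤ gstar B w + 1 :=
  sup'_le _ _ fun z _ => by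
    have hwt_z : (hwt (B *ᵥ z + w) : ℝ) ≤ hwt (B *ᵥ z + u) + 1 := by
      exact_mod_cast hwt_le_hwt_add_one i fun j hj => by simp [h j hj]
    have hz : (m : ℝ) - hwt (B *ᵥ z + w) ≤ gstar B w :=
      le_sup' (fun z => (m : ℝ) - hwt (B *ᵥ z + w)) (mem_univ z)
    linarith

lemma hasBoundedDifferences_gstar {m n : ℕ} (B : Matrix (Fin m) (Fin n) (ZMod 2)) :
    HasBoundedDifferences 1 (gstar B) := fun v i b =>
  abs_sub_le_iff.2
    ⟨by linarith [gstar_le_gstar_add_one B i fun j hj => update_of_ne hj b v],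
     by linarith [gstar_le_gstar_add_one B i fun j hj => (update_of_ne hj b v).symm]⟩

lemma gstarMean_eq_cubeMean {m n : ℕ} (B : Matrix (Fin m) (Fin n) (ZMod 2)) :
    gstarMean B = cubeMean (gstar B) := by
  rw [gstarMean, cubeMean, zpow_neg, zpow_natCast, inv_mul_eq_div]

/-- **Concentration.** There is a universal constant `C > 0` such that for all `m ≥ 1`, `n`,
every `B ∈ (ZMod 2)^{m×n}` and every `t > 0`, the number of `v ∈ (ZMod 2)^m` with
`|g*(v) - μ| ≥ t·m` is at most `2^{m+1}·exp(-C·m·t²)`. -/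
theorem gstar_concentration :
    ∃ C : ℝ, 0 < C ∧
      ∀ (m n : ℕ), 1 ≤ m →
        ∀ (B : Matrix (Fin m) (Fin n) (ZMod 2)) (t : ℝ), 0 < t →
          ((Finset.univ.filter fun v : Fin m → ZMod 2 =>
              t * m ≤ |gstar B v - gstarMean B|).card : ℝ)
            ≤ 2 ^ (m + 1) * Real.exp (-C * m * t ^ 2) := by
  refine ⟨2, two_pos, fun m n hm B t ht => ?_⟩
  have hm0 : (m : ℝ) ≠ 0 := by positivity
  have := (hasBoundedDifferences_gstar B).card_le_abs_sub_cubeMean_le (s := t * m) (by positivity)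
  rw [← gstarMean_eq_cubeMean] at this
  convert this using 4
  field_simp
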